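/- Let g ∈ ℂ be nonzero. In ℂ^{Fin 2 × Fin 2} with standard basis e_{(a,b)}, define ψ^(g) = (conj(g)·e_{(0,1)} − e_{(1,0)})/√(1+|g|²) and let S be the swap operator determined by S e_{(a,b)} = e_{(b,a)}. Then S ψ^(g) = −conj(g) · √((1 + |g^{−1}|²)/(1 + |g|²)) · ψ^(g^{−1}). -/

import Mathlib

/-!
The swap exchanges `e_{(0,1)}` and `e_{(1,0)}`, so `S ψ^(g)` is `conj g · e_{(1,0)} − e_{(0,1)}` up to
normalisation. Since `conj g · conj g⁻¹ = 1`, this vector is `−conj g` times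
`conj g⁻¹ · e_{(0,1)} − e_{(1,0)}`, and the normalisations `√(1+|g|²)` and `√(1+|g⁻¹|²)` differ by
the factor `√((1+|g⁻¹|²)/(1+|g|²))`.
-/

noncomputable section

/-- The two-qubit basis vector `e_{(a,b)}`. -/
def eBasis (a b : Fin 2) : Fin 2 × Fin 2 → ℂ := Pi.single (a, b) (1 : ℂ)

/-- The two-qubit vector `ψ^(g) = (conj g · e_{(0,1)} − e_{(1,0)}) / √(1+|g|²)`. -/
def psiVec (g : ℂ) : Fin 2 × Fin 2 → ℂ :=
  (Real.sqrt (1 + ‖g‖ ^ 2))⁻¹ •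
    ((starRingEnd ℂ g) • eBasis 0 1 - eBasis 1 0)

/-- The swap operator on two-qubit vectors, `(S v)(a, b) = v(b, a)`. -/
def swapOp (v : Fin 2 × Fin 2 → ℂ) : Fin 2 × Fin 2 → ℂ := fun p => v (p.2, p.1)

theorem swapOp_sub (v w : Fin 2 × Fin 2 → ℂ) : swapOp (v - w) = swapOp v - swapOp w := rfl

theorem swapOp_smul {R : Type*} [SMul R ℂ] (r : R) (v : Fin 2 × Fin 2 → ℂ) :
    swapOp (r • v) = r • swapOp v := rfl

theorem swapOp_eBasis (a b : Fin 2) : swapOp (eBasis a b) = eBasis b a := by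
  funext p
  simp only [swapOp, eBasis, Pi.single_apply, Prod.ext_iff, and_comm]

theorem swapOp_psiVec (g : ℂ) :
    swapOp (psiVec g) = (√(1 + ‖g‖ ^ 2))⁻¹ • (starRingEnd ℂ g • eBasis 1 0 - eBasis 0 1) := by
  rw [psiVec, swapOp_smul, swapOp_sub, swapOp_smul, swapOp_eBasis, swapOp_eBasis]

theorem Real.sqrt_div_mul_inv_sqrt {x : ℝ} (hx : 0 < x) {y : ℝ} (hy : 0 ≤ y) :
    √(x / y) * (√x)⁻¹ = (√y)⁻¹ := by
  rw [Real.sqrt_div' x hy, div_mul_eq_mul_div, mul_inv_cancel₀ (Real.sqrt_pos.2 hx).ne', one_div]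

theorem neg_smul_smul_sub_of_mul_eq_one {R M : Type*} [CommRing R] [AddCommGroup M] [Module R M]
    {a b : R} (hab : a * b = 1) (u v : M) : -a • (b • u - v) = a • v - u := by
  rw [smul_sub, neg_smul, neg_smul, smul_smul, hab, one_smul]
  abel

/-- Behaviour of `ψ^(g)` under the swap:
`S ψ^(g) = −conj g · √((1+|g⁻¹|²)/(1+|g|²)) · ψ^(g⁻¹)` (the prefactor has modulus one).
This is the key step in analysing the PVBS-deformed Hamiltonian under spatial reflection. -/
theorem swap_psiVec (g : ℂ) (hg : g ≠ 0) :
    swapOp (psiVec g) =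
      (-(starRingEnd ℂ g) *
          ((Real.sqrt ((1 + ‖g⁻¹‖ ^ 2) / (1 + ‖g‖ ^ 2)) : ℝ) : ℂ)) •
        psiVec g⁻¹ := by
  have hconj : starRingEnd ℂ g * starRingEnd ℂ g⁻¹ = 1 := by
    rw [← map_mul, mul_inv_cancel₀ hg, map_one]
  have hnorm : √((1 + ‖g⁻¹‖ ^ 2) / (1 + ‖g‖ ^ 2)) * (√(1 + ‖g⁻¹‖ ^ 2))⁻¹ = (√(1 + ‖g‖ ^ 2))⁻¹ :=
    Real.sqrt_div_mul_inv_sqrt (by positivity) (by positivity)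
  calc swapOp (psiVec g)
      = (√(1 + ‖g‖ ^ 2))⁻¹ • (starRingEnd ℂ g • eBasis 1 0 - eBasis 0 1) := swapOp_psiVec g
    _ = (√((1 + ‖g⁻¹‖ ^ 2) / (1 + ‖g‖ ^ 2)) * (√(1 + ‖g⁻¹‖ ^ 2))⁻¹) •
          -starRingEnd ℂ g • (starRingEnd ℂ g⁻¹ • eBasis 0 1 - eBasis 1 0) := by
      rw [hnorm, neg_smul_smul_sub_of_mul_eq_one hconj]
    _ = _ := by
      rw [psiVec]
      module
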